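/- Let M be a compact smooth manifold and let E and F be smooth complex vector bundles of finite rank over M. If Γ^∞(E) and Γ^∞(F) are isomorphic as C^∞(M,ℂ)-modules, then there exists a smooth global section Φ of the homomorphism bundle Hom(E,F) such that for every x ∈ M the linear map Φ(x) : E_x → F_x is a ℂ-linear isomorphism; that is, E and F are isomorphic as smooth vector bundles. -/

import Mathlib

/-!
A `C^∞(M, ℂ)`-linear map `T : Γ(E) → Γ(F)` is pointwise: if `s x = 0` then `T s x = 0`. Take a
bump function `f` with `f = 1` near `x` and support in a trivializing set of `E`. Expanding `s` in
the trivialization, `f² • s = ∑ gᵢ • tᵢ` for global sections `tᵢ` and global functions `gᵢ` that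
vanish at `x`, while `T ((1 - f²) • s) x = (1 - f x ^ 2) • T s x = 0`. Since every vector of `E_x`
extends to a global section, `T` therefore induces linear maps `T_x : E_x → F_x` with
`T_x (s x) = T s x`; they are inverted by the maps induced by `T⁻¹`. In a trivialization near
`x₀` the map `T_x` sends the frame vectors to the values of the smooth sections `T tᵢ`, so
`x ↦ T_x` is a smooth section of `Hom(E, F)`.
-/

open Bundle Manifold
open scoped TensorProduct

local notation "∞" => (⊤ : ℕ∞)

noncomputable section

/-- Complex multiplication and addition are smooth over `ℝ`, so that the complex-valued smooth
functions on a real manifold form a (comm)ring. -/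
instance : ContMDiffRing 𝓘(ℝ, ℂ) ∞ ℂ where
  contMDiff_add := by
    rw [contMDiff_iff]
    refine ⟨continuous_add, fun x y => ?_⟩
    simp only [mfld_simps]
    exact contDiff_add.contDiffOn
  contMDiff_mul := by
    rw [contMDiff_iff]
    refine ⟨continuous_mul, fun x y => ?_⟩
    simp only [mfld_simps]
    exact contDiff_mul.contDiffOn

variable {EM : Type*} [NormedAddCommGroup EM] [NormedSpace ℝ EM] [FiniteDimensional ℝ EM]
  {HM : Type*} [TopologicalSpace HM] {IM : ModelWithCorners ℝ EM HM}
  {M : Type*} [TopologicalSpace M] [ChartedSpace HM M] [IsManifold IM ∞ M]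
  [T2Space M] [SecondCountableTopology M] [CompactSpace M]

/-- The constant functions make the smooth complex-valued functions a `ℂ`-algebra. -/
instance : Algebra ℂ C^∞⟮IM, M; 𝓘(ℝ, ℂ), ℂ⟯ :=
  RingHom.toAlgebra
    { toFun := fun c => ⟨fun _ => c, contMDiff_const⟩
      map_one' := rfl
      map_mul' := fun _ _ => rfl
      map_zero' := rfl
      map_add' := fun _ _ => rfl }

variable {F : Type*} [NormedAddCommGroup F] [NormedSpace ℂ F] [FiniteDimensional ℂ F]
  {V : M → Type*} [TopologicalSpace (TotalSpace F V)]
  [∀ x, AddCommGroup (V x)] [∀ x, Module ℂ (V x)] [∀ x, TopologicalSpace (V x)]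
  [FiberBundle F V] [VectorBundle ℂ F V] [VectorBundle ℝ F V] [ContMDiffVectorBundle ∞ F V IM]

/-- Pointwise scalar multiplication of a smooth section by a smooth function. -/
instance ContMDiffSection.instSMulSmoothMap :
    SMul C^∞⟮IM, M; 𝓘(ℝ, ℂ), ℂ⟯ Cₛ^∞⟮IM; F, V⟯ := by
  refine ⟨fun f s => ⟨fun x => f x • s x, ?_⟩⟩
  intro x₀
  have hs := s.contMDiff x₀
  have hf : ContMDiffAt IM 𝓘(ℝ, ℂ) ∞ f x₀ := f.contMDiff x₀
  rw [contMDiffAt_section] at hs ⊢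
  set e := trivializationAt F V x₀
  have h1 : ContMDiffAt IM 𝓘(ℝ, F →L[ℝ] F) ∞
      (fun x => (ContinuousLinearMap.lsmul ℝ ℂ (f x) : F →L[ℝ] F)) x₀ :=
    ContDiff.comp_contMDiffAt
      (g := ⇑(ContinuousLinearMap.lsmul ℝ ℂ : ℂ →L[ℝ] F →L[ℝ] F))
      (ContinuousLinearMap.contDiff _) hf
  refine (h1.clm_apply hs).congr_of_eventuallyEq ?_
  refine Filter.eventually_of_mem
    (e.open_baseSet.mem_nhds <| mem_baseSet_trivializationAt F V x₀) ?_
  intro x hx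
  simp only [ContinuousLinearMap.lsmul_apply]
  exact (e.linear ℂ hx).2 (f x) (s x)

set_option linter.unusedSectionVars false in
@[simp]
theorem ContMDiffSection.coe_smul_smoothMap (f : C^∞⟮IM, M; 𝓘(ℝ, ℂ), ℂ⟯)
    (s : Cₛ^∞⟮IM; F, V⟯) (x : M) : (f • s) x = f x • s x :=
  rfl

/-- The smooth sections of a smooth complex vector bundle form a module over the algebra of
smooth complex-valued functions on the base. -/
instance ContMDiffSection.instModuleSmoothMap :
    Module C^∞⟮IM, M; 𝓘(ℝ, ℂ), ℂ⟯ Cₛ^∞⟮IM; F, V⟯ where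
  one_smul s := ContMDiffSection.ext fun x => one_smul ℂ (s x)
  mul_smul f g s := ContMDiffSection.ext fun x => mul_smul (f x) (g x) (s x)
  smul_zero f := ContMDiffSection.ext fun x => smul_zero (f x)
  smul_add f s t := ContMDiffSection.ext fun x => smul_add (f x) (s x) (t x)
  add_smul f g s := ContMDiffSection.ext fun x => add_smul (f x) (g x) (s x)
  zero_smul s := ContMDiffSection.ext fun x => zero_smul ℂ (s x)

instance ContMDiffSection.instModuleComplex : Module ℂ Cₛ^∞⟮IM; F, V⟯ :=
  Module.compHom _ (algebraMap ℂ C^∞⟮IM, M; 𝓘(ℝ, ℂ), ℂ⟯)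

instance ContMDiffSection.instIsScalarTowerComplex :
    IsScalarTower ℂ C^∞⟮IM, M; 𝓘(ℝ, ℂ), ℂ⟯ Cₛ^∞⟮IM; F, V⟯ :=
  ⟨fun c f s => by
    show (c • f) • s = algebraMap ℂ C^∞⟮IM, M; 𝓘(ℝ, ℂ), ℂ⟯ c • f • s
    rw [Algebra.smul_def, mul_smul]⟩

variable {F₂ : Type*} [NormedAddCommGroup F₂] [NormedSpace ℂ F₂] [FiniteDimensional ℂ F₂]
  {W : M → Type*} [TopologicalSpace (TotalSpace F₂ W)]
  [∀ x, AddCommGroup (W x)] [∀ x, Module ℂ (W x)] [∀ x, TopologicalSpace (W x)]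
  [FiberBundle F₂ W] [VectorBundle ℂ F₂ W] [VectorBundle ℝ F₂ W] [ContMDiffVectorBundle ∞ F₂ W IM]
  [∀ x, IsTopologicalAddGroup (W x)] [∀ x, ContinuousSMul ℂ (W x)]
  [VectorBundle ℝ (F →L[ℂ] F₂) (fun x ↦ V x →SL[RingHom.id ℂ] W x)]
  [ContMDiffVectorBundle ∞ (F →L[ℂ] F₂) (fun x ↦ V x →SL[RingHom.id ℂ] W x) IM]

open Topology

section SectionSum

variable {𝕜 : Type*} [NontriviallyNormedField 𝕜] {E : Type*} [NormedAddCommGroup E]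
  [NormedSpace 𝕜 E] {H : Type*} [TopologicalSpace H] {I : ModelWithCorners 𝕜 E H}
  {M : Type*} [TopologicalSpace M] [ChartedSpace H M] {n : WithTop ℕ∞}
  {F : Type*} [NormedAddCommGroup F] [NormedSpace 𝕜 F]
  {V : M → Type*} [TopologicalSpace (TotalSpace F V)] [∀ x, TopologicalSpace (V x)]
  [∀ x, AddCommGroup (V x)] [∀ x, Module 𝕜 (V x)] [FiberBundle F V] [VectorBundle 𝕜 F V]

@[simp]
theorem ContMDiffSection.coe_finsetSum {ι : Type*} (t : Finset ι) (s : ι → Cₛ^n⟮I; F, V⟯) :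
    ⇑(∑ i ∈ t, s i) = ∑ i ∈ t, ⇑(s i) :=
  map_sum (ContMDiffSection.coeAddHom I F n V) s t

end SectionSum

section FiberContinuity

variable {𝕜 : Type*} [NontriviallyNormedField 𝕜] [CompleteSpace 𝕜]
  {X : Type*} [AddCommGroup X] [Module 𝕜 X] [TopologicalSpace X]
  {Y : Type*} [AddCommGroup Y] [Module 𝕜 Y] [TopologicalSpace Y]
  {E₁ : Type*} [AddCommGroup E₁] [Module 𝕜 E₁] [TopologicalSpace E₁] [IsTopologicalAddGroup E₁]
  [ContinuousSMul 𝕜 E₁] [T2Space E₁] [FiniteDimensional 𝕜 E₁]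
  {E₂ : Type*} [AddCommGroup E₂] [Module 𝕜 E₂] [TopologicalSpace E₂] [IsTopologicalAddGroup E₂]
  [ContinuousSMul 𝕜 E₂]

theorem LinearMap.continuous_of_continuousLinearEquiv (φ : X →ₗ[𝕜] Y) (e₁ : X ≃L[𝕜] E₁)
    (e₂ : Y ≃L[𝕜] E₂) : Continuous φ := by
  have h : Continuous (e₂.toLinearMap ∘ₗ φ ∘ₗ e₁.symm.toLinearMap) :=
    LinearMap.continuous_of_finiteDimensional _
  convert e₂.symm.continuous.comp (h.comp e₁.continuous) using 1
  ext v
  simp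

end FiberContinuity

section BasisCriterion

variable {EM : Type*} [NormedAddCommGroup EM] [NormedSpace ℝ EM]
  {HM : Type*} [TopologicalSpace HM] {IM : ModelWithCorners ℝ EM HM}
  {M : Type*} [TopologicalSpace M] [ChartedSpace HM M] {n : WithTop ℕ∞}
  {F : Type*} [NormedAddCommGroup F] [NormedSpace ℂ F] [FiniteDimensional ℂ F]
  {F₂ : Type*} [NormedAddCommGroup F₂] [NormedSpace ℂ F₂]

theorem contMDiffAt_clm_of_apply_basis {ι : Type*} [Fintype ι] (b : Module.Basis ι ℂ F)
    {g : M → F →L[ℂ] F₂} {x₀ : M} (hg : ∀ i, ContMDiffAt IM 𝓘(ℝ, F₂) n (fun x => g x (b i)) x₀) :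
    ContMDiffAt IM 𝓘(ℝ, F →L[ℂ] F₂) n g x₀ := by
  have hsum : g = fun x => ∑ i, ContinuousLinearMap.smulRightL ℂ F F₂
      (LinearMap.toContinuousLinearMap (b.coord i)) (g x (b i)) := by
    funext x
    ext v
    simp only [ContinuousLinearMap.smulRightL_apply_apply, sum_apply,
      ContinuousLinearMap.smulRight_apply, LinearMap.coe_toContinuousLinearMap',
      Module.Basis.coord_apply]
    conv_lhs => rw [← b.sum_repr v]
    simp only [map_sum, map_smul]
  rw [hsum]
  exact contMDiffAt_finsetSum fun i _ =>
    ((ContinuousLinearMap.smulRightL ℂ F F₂ _).restrictScalars ℝ).contDiff.comp_contMDiffAt (hg i)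

end BasisCriterion

section Bump

variable {EM : Type*} [NormedAddCommGroup EM] [NormedSpace ℝ EM] [FiniteDimensional ℝ EM]
  {HM : Type*} [TopologicalSpace HM] {IM : ModelWithCorners ℝ EM HM}
  {M : Type*} [TopologicalSpace M] [ChartedSpace HM M] [IsManifold IM ∞ M] [T2Space M]

theorem ContMDiffMap.exists_complex_eventually_one_tsupport_subset {x : M} {s : Set M}
    (hs : s ∈ 𝓝 x) : ∃ f : C^∞⟮IM, M; 𝓘(ℝ, ℂ), ℂ⟯, (∀ᶠ y in 𝓝 x, f y = 1) ∧ tsupport f ⊆ s := by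
  obtain ⟨φ, -, hφs⟩ := (SmoothBumpFunction.nhds_basis_tsupport (I := IM) x).mem_iff.1 hs
  refine ⟨⟨Complex.ofRealCLM ∘ φ, Complex.ofRealCLM.contDiff.comp_contMDiff φ.contMDiff⟩,
    φ.eventuallyEq_one.mono fun y hy => ?_, ?_⟩
  · simp [hy]
  · exact (tsupport_comp_subset Complex.ofReal_zero _).trans hφs

end Bump

section LocalFrame

variable {EM : Type*} [NormedAddCommGroup EM] [NormedSpace ℝ EM]
  {HM : Type*} [TopologicalSpace HM] {IM : ModelWithCorners ℝ EM HM}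
  {M : Type*} [TopologicalSpace M] [ChartedSpace HM M]
  {F : Type*} [NormedAddCommGroup F] [NormedSpace ℂ F]
  {V : M → Type*} [TopologicalSpace (TotalSpace F V)]
  [∀ x, AddCommGroup (V x)] [∀ x, Module ℂ (V x)] [∀ x, TopologicalSpace (V x)] [FiberBundle F V]

namespace ContMDiffSection

variable [VectorBundle ℂ F V]

theorem smoothMap_smul_apply (g : C^∞⟮IM, M; 𝓘(ℝ, ℂ), ℂ⟯) (s : Cₛ^∞⟮IM; F, V⟯) (x : M) :
    (g • s) x = g x • s x :=
  rfl

theorem complex_smul_apply [VectorBundle ℝ F V] (c : ℂ) (s : Cₛ^∞⟮IM; F, V⟯) (x : M) :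
    (c • s) x = c • s x :=
  rfl

end ContMDiffSection

variable [VectorBundle ℝ F V] [ContMDiffVectorBundle ∞ F V IM]

namespace Bundle.Trivialization

variable (e : Trivialization F (π F V)) [MemTrivializationAtlas e] {f : C^∞⟮IM, M; 𝓘(ℝ, ℂ), ℂ⟯}

def bumpCoeff (hf : tsupport f ⊆ e.baseSet) (s : Cₛ^∞⟮IM; F, V⟯) (φ : F →L[ℂ] ℂ) :
    C^∞⟮IM, M; 𝓘(ℝ, ℂ), ℂ⟯ :=
  ⟨fun x => f x * φ (e ⟨x, s x⟩).2, contMDiff_of_tsupport fun x hx =>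
    (f.contMDiff x).mul <| (φ.restrictScalars ℝ).contDiff.comp_contMDiffAt
      ((e.contMDiffAt_section_iff (hf (tsupport_mul_subset_left hx))).1 (s.contMDiff x))⟩

@[simp]
theorem bumpCoeff_apply (hf : tsupport f ⊆ e.baseSet) (s : Cₛ^∞⟮IM; F, V⟯) (φ : F →L[ℂ] ℂ)
    (x : M) : e.bumpCoeff hf s φ x = f x * φ (e ⟨x, s x⟩).2 :=
  rfl

variable [VectorBundle ℂ F V]

theorem contMDiff_smul_symm (hf : tsupport f ⊆ e.baseSet) (v : F) :
    ContMDiff IM (IM.prod 𝓘(ℝ, F)) ∞ fun x => TotalSpace.mk' F x (f x • e.symm x v) := by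
  intro y
  by_cases hy : y ∈ e.baseSet
  · rw [e.contMDiffAt_section_iff hy]
    refine (ContinuousLinearMap.smulRight (1 : ℂ →L[ℝ] ℂ) v).contDiff.comp_contMDiffAt
      (f.contMDiff y) |>.congr_of_eventuallyEq ?_
    filter_upwards [e.open_baseSet.mem_nhds hy] with x hx
    simp [(e.linear ℂ hx).2, e.apply_mk_symm hx]
  · refine (contMDiff_zeroSection ℝ V y).congr_of_eventuallyEq ?_
    filter_upwards [(isClosed_tsupport f).isOpen_compl.mem_nhds fun h => hy (hf h)] with x hx
    simp [image_eq_zero_of_notMem_tsupport hx, zeroSection]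

def bumpSection (hf : tsupport f ⊆ e.baseSet) (v : F) : Cₛ^∞⟮IM; F, V⟯ :=
  ⟨fun x => f x • e.symm x v, e.contMDiff_smul_symm hf v⟩

@[simp]
theorem bumpSection_apply (hf : tsupport f ⊆ e.baseSet) (v : F) (x : M) :
    e.bumpSection hf v x = f x • e.symm x v :=
  rfl

theorem mul_self_smul_eq_sum_bumpCoeff_smul_bumpSection [FiniteDimensional ℂ F]
    (hf : tsupport f ⊆ e.baseSet) (s : Cₛ^∞⟮IM; F, V⟯) {ι : Type*} [Fintype ι]
    (b : Module.Basis ι ℂ F) :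
    (f * f) • s = ∑ i, e.bumpCoeff hf s (LinearMap.toContinuousLinearMap (b.coord i)) •
      e.bumpSection hf (b i) := by
  ext x
  simp only [ContMDiffSection.coe_finsetSum, Finset.sum_apply,
    ContMDiffSection.smoothMap_smul_apply, bumpCoeff_apply, bumpSection_apply,
    ContMDiffMap.coe_mul, Pi.mul_apply]
  by_cases hx : x ∈ e.baseSet
  · conv_lhs => rw [← e.symm_apply_apply_mk hx (s x), ← b.sum_repr (e ⟨x, s x⟩).2,
      ← e.coe_symmₗ (R := ℂ) hx, map_sum, Finset.smul_sum]
    refine Finset.sum_congr rfl fun i _ => ?_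
    rw [map_smul, e.coe_symmₗ hx, smul_smul, smul_smul, LinearMap.coe_toContinuousLinearMap',
      Module.Basis.coord_apply]
    ring_nf
  · simp [image_eq_zero_of_notMem_tsupport fun h => hx (hf h)]

end Bundle.Trivialization

variable [VectorBundle ℂ F V] [FiniteDimensional ℝ EM] [IsManifold IM ∞ M] [T2Space M]

theorem ContMDiffSection.exists_apply_eq {x : M} (v : V x) : ∃ s : Cₛ^∞⟮IM; F, V⟯, s x = v := by
  let e := trivializationAt F V x
  have hx : x ∈ e.baseSet := mem_baseSet_trivializationAt F V x
  obtain ⟨f, hf1, hfe⟩ := ContMDiffMap.exists_complex_eventually_one_tsupport_subset (IM := IM)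
    (e.open_baseSet.mem_nhds hx)
  exact ⟨e.bumpSection hfe (e ⟨x, v⟩).2, by simp [hf1.self_of_nhds, e.symm_apply_apply_mk hx]⟩

end LocalFrame

section FiberMap

variable {EM : Type*} [NormedAddCommGroup EM] [NormedSpace ℝ EM] [FiniteDimensional ℝ EM]
  {HM : Type*} [TopologicalSpace HM] {IM : ModelWithCorners ℝ EM HM}
  {M : Type*} [TopologicalSpace M] [ChartedSpace HM M] [IsManifold IM ∞ M] [T2Space M]
  {F : Type*} [NormedAddCommGroup F] [NormedSpace ℂ F] [FiniteDimensional ℂ F]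
  {V : M → Type*} [TopologicalSpace (TotalSpace F V)]
  [∀ x, AddCommGroup (V x)] [∀ x, Module ℂ (V x)] [∀ x, TopologicalSpace (V x)]
  [FiberBundle F V] [VectorBundle ℂ F V] [VectorBundle ℝ F V] [ContMDiffVectorBundle ∞ F V IM]
  {F₂ : Type*} [NormedAddCommGroup F₂] [NormedSpace ℂ F₂]
  {W : M → Type*} [TopologicalSpace (TotalSpace F₂ W)]
  [∀ x, AddCommGroup (W x)] [∀ x, Module ℂ (W x)] [∀ x, TopologicalSpace (W x)]
  [FiberBundle F₂ W] [VectorBundle ℂ F₂ W] [VectorBundle ℝ F₂ W]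

namespace ContMDiffSection

theorem map_apply_eq_zero_of_apply_eq_zero
    (T : Cₛ^∞⟮IM; F, V⟯ →ₗ[C^∞⟮IM, M; 𝓘(ℝ, ℂ), ℂ⟯] Cₛ^∞⟮IM; F₂, W⟯) {s : Cₛ^∞⟮IM; F, V⟯} {x : M}
    (hs : s x = 0) : T s x = 0 := by
  let e := trivializationAt F V x
  have hx : x ∈ e.baseSet := mem_baseSet_trivializationAt F V x
  obtain ⟨f, hf1, hfe⟩ := ContMDiffMap.exists_complex_eventually_one_tsupport_subset (IM := IM)
    (e.open_baseSet.mem_nhds hx)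
  let b := Module.finBasis ℂ F
  have h_near : T ((f * f) • s) x = 0 := by
    rw [e.mul_self_smul_eq_sum_bumpCoeff_smul_bumpSection hfe s b, map_sum, coe_finsetSum,
      Finset.sum_apply]
    refine Finset.sum_eq_zero fun i _ => ?_
    have h0 : (e ⟨x, 0⟩).2 = 0 := congrArg Prod.snd (e.zeroSection ℂ hx)
    rw [map_smul, smoothMap_smul_apply, e.bumpCoeff_apply, hs, h0, map_zero, mul_zero, zero_smul]
  have h_far : T ((1 - f * f) • s) x = 0 := by
    rw [map_smul, smoothMap_smul_apply]
    simp [hf1.self_of_nhds]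
  calc T s x = T ((f * f) • s + (1 - f * f) • s) x := by rw [← add_smul, add_sub_cancel, one_smul]
    _ = 0 := by rw [map_add, coe_add, Pi.add_apply, h_near, h_far, add_zero]

theorem map_apply_eq_of_apply_eq
    (T : Cₛ^∞⟮IM; F, V⟯ →ₗ[C^∞⟮IM, M; 𝓘(ℝ, ℂ), ℂ⟯] Cₛ^∞⟮IM; F₂, W⟯) {s t : Cₛ^∞⟮IM; F, V⟯}
    {x : M} (h : s x = t x) : T s x = T t x := by
  have := map_apply_eq_zero_of_apply_eq_zero T (s := s - t) <| by
    rw [coe_sub, Pi.sub_apply, h, sub_self]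
  rwa [map_sub, coe_sub, Pi.sub_apply, sub_eq_zero] at this

def fiberMap (T : Cₛ^∞⟮IM; F, V⟯ →ₗ[C^∞⟮IM, M; 𝓘(ℝ, ℂ), ℂ⟯] Cₛ^∞⟮IM; F₂, W⟯) (x : M) :
    V x →ₗ[ℂ] W x where
  toFun v := T (exists_apply_eq (IM := IM) v).choose x
  map_add' v w := by
    rw [← Pi.add_apply, ← coe_add, ← map_add]
    exact map_apply_eq_of_apply_eq T <| by
      simp only [coe_add, Pi.add_apply, Exists.choose_spec (exists_apply_eq _)]
  map_smul' c v := by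
    rw [RingHom.id_apply, ← complex_smul_apply, ← T.map_smul_of_tower]
    exact map_apply_eq_of_apply_eq T <| by
      simp only [complex_smul_apply, Exists.choose_spec (exists_apply_eq _)]

theorem fiberMap_apply_apply (T : Cₛ^∞⟮IM; F, V⟯ →ₗ[C^∞⟮IM, M; 𝓘(ℝ, ℂ), ℂ⟯] Cₛ^∞⟮IM; F₂, W⟯)
    (s : Cₛ^∞⟮IM; F, V⟯) (x : M) : fiberMap T x (s x) = T s x :=
  map_apply_eq_of_apply_eq T (exists_apply_eq (s x)).choose_spec

section Equiv

variable [FiniteDimensional ℂ F₂] [ContMDiffVectorBundle ∞ F₂ W IM]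

theorem fiberMap_symm_fiberMap
    (T : Cₛ^∞⟮IM; F, V⟯ ≃ₗ[C^∞⟮IM, M; 𝓘(ℝ, ℂ), ℂ⟯] Cₛ^∞⟮IM; F₂, W⟯) (x : M) (v : V x) :
    fiberMap T.symm.toLinearMap x (fiberMap T.toLinearMap x v) = v := by
  obtain ⟨s, rfl⟩ := exists_apply_eq (IM := IM) (F := F) v
  rw [fiberMap_apply_apply, fiberMap_apply_apply]
  exact congrArg (· x) (T.symm_apply_apply s)

theorem bijective_fiberMap (T : Cₛ^∞⟮IM; F, V⟯ ≃ₗ[C^∞⟮IM, M; 𝓘(ℝ, ℂ), ℂ⟯] Cₛ^∞⟮IM; F₂, W⟯)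
    (x : M) : Function.Bijective (fiberMap T.toLinearMap x) :=
  Function.bijective_iff_has_inverse.2 ⟨fiberMap T.symm.toLinearMap x,
    fiberMap_symm_fiberMap T x, fun w => by simpa using fiberMap_symm_fiberMap T.symm x w⟩

end Equiv

variable [∀ x, IsTopologicalAddGroup (W x)] [∀ x, ContinuousSMul ℂ (W x)]

def fiberMapL (T : Cₛ^∞⟮IM; F, V⟯ →ₗ[C^∞⟮IM, M; 𝓘(ℝ, ℂ), ℂ⟯] Cₛ^∞⟮IM; F₂, W⟯) (x : M) :
    V x →L[ℂ] W x :=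
  ⟨fiberMap T x, (fiberMap T x).continuous_of_continuousLinearEquiv
    (VectorBundle.continuousLinearEquivAt ℂ F V x) (VectorBundle.continuousLinearEquivAt ℂ F₂ W x)⟩

theorem contMDiff_fiberMapL
    (T : Cₛ^∞⟮IM; F, V⟯ →ₗ[C^∞⟮IM, M; 𝓘(ℝ, ℂ), ℂ⟯] Cₛ^∞⟮IM; F₂, W⟯) :
    ContMDiff IM (IM.prod 𝓘(ℝ, F →L[ℂ] F₂)) ∞ fun x =>
      TotalSpace.mk' (F →L[ℂ] F₂) (E := fun x ↦ V x →SL[RingHom.id ℂ] W x) x (fiberMapL T x) := by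
  intro x₀
  let eV := trivializationAt F V x₀
  let eW := trivializationAt F₂ W x₀
  have hx₀ : x₀ ∈ eV.baseSet := mem_baseSet_trivializationAt F V x₀
  obtain ⟨f, hf1, hfe⟩ := ContMDiffMap.exists_complex_eventually_one_tsupport_subset (IM := IM)
    (eV.open_baseSet.mem_nhds hx₀)
  let b := Module.finBasis ℂ F
  rw [contMDiffAt_section]
  refine contMDiffAt_clm_of_apply_basis b fun i => ?_
  refine ((contMDiffAt_section x₀).1 ((T (eV.bumpSection hfe (b i))).contMDiff x₀))
    |>.congr_of_eventuallyEq ?_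
  filter_upwards [hf1, eV.open_baseSet.mem_nhds hx₀,
    eW.open_baseSet.mem_nhds (mem_baseSet_trivializationAt F₂ W x₀)] with x hx1 hxV hxW
  rw [hom_trivializationAt_apply, ContinuousLinearMap.inCoordinates_eq hxV hxW]
  simp only [fiberMapL, ContinuousLinearMap.comp_apply, ContinuousLinearEquiv.coe_coe,
    Trivialization.continuousLinearEquivAt_symm_apply, ContinuousLinearMap.coe_mk',
    Trivialization.continuousLinearEquivAt_apply, ← fiberMap_apply_apply,
    Trivialization.bumpSection_apply, hx1, one_smul]
  rfl

def homSection (T : Cₛ^∞⟮IM; F, V⟯ →ₗ[C^∞⟮IM, M; 𝓘(ℝ, ℂ), ℂ⟯] Cₛ^∞⟮IM; F₂, W⟯) :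
    Cₛ^∞⟮IM; F →L[ℂ] F₂, fun x ↦ V x →SL[RingHom.id ℂ] W x⟯ :=
  ⟨fiberMapL T, contMDiff_fiberMapL T⟩

end ContMDiffSection

end FiberMap

/-- If the modules of smooth sections of two smooth complex vector bundles over a compact manifold
are isomorphic over the smooth functions, then the bundles are isomorphic: there is a smooth global
section of `Hom(E,F)` which is a fiberwise linear isomorphism. -/
theorem bundle_iso_of_sections_iso
    (e : Cₛ^∞⟮IM; F, V⟯ ≃ₗ[C^∞⟮IM, M; 𝓘(ℝ, ℂ), ℂ⟯] Cₛ^∞⟮IM; F₂, W⟯) :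
    ∃ Φ : Cₛ^∞⟮IM; F →L[ℂ] F₂, fun x ↦ V x →SL[RingHom.id ℂ] W x⟯,
      ∀ x : M, Function.Bijective (Φ x) :=
  ⟨ContMDiffSection.homSection e.toLinearMap, ContMDiffSection.bijective_fiberMap e⟩
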